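/- Let Ā = ⟨A_α : α < ω₁⟩ be a sequence of pairwise disjoint subsets of ω₁, let S ⊆ ω₁, and let γ ≥ ω₁ be an ordinal such that S is certified at γ modulo Ā. Then ω₁ ≤ γ < ω₂, and for every canonical function g for γ and every α ∈ ω₁ \ S, the set {β < ω₁ : g(β) ∈ A_α} is nonstationary. -/

import Mathlib

noncomputable section

/-- The first uncountable ordinal. -/
def omega1 : Ordinal.{0} := (Cardinal.aleph 1).ord

/-- The second uncountable cardinal, as an ordinal. -/
def omega2 : Ordinal.{0} := (Cardinal.aleph 2).ord

open Classical in
/-- The order type of a set of ordinals (the unique ordinal whose lift is the order type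
of the set with its induced well-order; every bounded set of ordinals has one). -/
def otp (s : Set Ordinal.{0}) : Ordinal.{0} :=
  if h : ∃ o : Ordinal.{0}, Ordinal.lift.{1} o = Ordinal.type ((· < ·) : s → s → Prop)
  then h.choose else 0

/-- `C` is a club subset of `ω₁`: a subset of `ω₁` that is unbounded in `ω₁` and
closed, i.e. contains the supremum of each of its nonempty subsets that is bounded
below `ω₁`. -/
def IsClub1 (C : Set Ordinal.{0}) : Prop :=
  C ⊆ Set.Iio omega1 ∧
  (∀ α < omega1, ∃ β ∈ C, α < β) ∧
  (∀ s : Set Ordinal.{0}, s ⊆ C → s.Nonempty → sSup s < omega1 → sSup s ∈ C)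

/-- `S` is a stationary subset of `ω₁`: it meets every club subset of `ω₁`. -/
def IsStationary1 (S : Set Ordinal.{0}) : Prop := ∀ C, IsClub1 C → (S ∩ C).Nonempty

/-- `S` is certified at `γ` modulo the sequence `A = ⟨A α : α < ω₁⟩`. -/
def Certified (A : Ordinal.{0} → Set Ordinal.{0}) (S : Set Ordinal.{0}) (γ : Ordinal.{0}) :
    Prop :=
  ∃ a : Ordinal.{0} → Set Ordinal.{0},
    (∀ α < omega1, a α ⊆ Set.Iio γ ∧ (a α).Countable ∧ otp (a α) ∈ ⋃ ξ ∈ S, A ξ) ∧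
    (∀ α β : Ordinal.{0}, α < β → β < omega1 → a α ⊂ a β) ∧
    (∀ β, β < omega1 → Order.IsSuccLimit β → a β = ⋃ (α) (_ : α < β), a α) ∧
    Set.Iio γ = ⋃ (α) (_ : α < omega1), a α

/-- `f` is a canonical function for `γ`: for some bijection `π : ω₁ → γ`,
`f α = otp (π[α])` for all `α < ω₁`. -/
def IsCanonical (γ : Ordinal.{0}) (f : Ordinal.{0} → Ordinal.{0}) : Prop :=
  ∃ π : Ordinal.{0} → Ordinal.{0}, Set.BijOn π (Set.Iio omega1) (Set.Iio γ) ∧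
    ∀ α < omega1, f α = otp (π '' Set.Iio α)

/-!
Fix a certifying chain `⟨a β : β < ω₁⟩` and a bijection `π : ω₁ → γ` defining `g`. Both
`β ↦ a β` and `β ↦ π[β]` are increasing sequences of countable sets, continuous at limits, with
union `γ`; so they agree on a club (a back-and-forth `ω`-chain gives unboundedness, continuity
gives closure). On that club `g β = otp (π[β]) = otp (a β) ∈ Ā(S)`, which misses `A α` for
`α ∉ S` by disjointness. That `γ < ω₂` holds because `γ` is a union of `ω₁` countable sets.
-/

open Cardinal Order Set
open scoped Ordinal

theorem omega1_eq_omega_one : omega1 = ω_ 1 :=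
  ord_aleph 1

theorem isSuccLimit_omega1 : IsSuccLimit omega1 :=
  omega1_eq_omega_one ▸ isSuccLimit_omega 1

theorem countable_Iio_of_lt_omega1 {ξ : Ordinal.{0}} (hξ : ξ < omega1) : (Iio ξ).Countable := by
  rw [← le_aleph0_iff_set_countable, mk_Iio_ordinal, ← lift_aleph0.{1, 0}, lift_le,
    ← lt_aleph_one_iff]
  exact lt_ord.1 hξ

theorem Set.Countable.exists_lt_omega1_subset_Iio {t : Set Ordinal.{0}} (ht : t.Countable)
    (htω : t ⊆ Iio omega1) : ∃ β < omega1, t ⊆ Iio β := by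
  have : Countable t := ht.to_subtype
  refine ⟨⨆ x : t, succ x.1, ?_, fun x hx => ?_⟩
  · exact omega1_eq_omega_one ▸ Ordinal.iSup_lt_omega_one fun x =>
      omega1_eq_omega_one ▸ isSuccLimit_omega1.succ_lt (htω x.2)
  · exact (lt_succ x).trans_le (Ordinal.le_iSup (fun y : t => succ y.1) ⟨x, hx⟩)

structure IsCountableFiltration {X : Type*} (c : Ordinal.{0} → Set X) : Prop where
  mono : ∀ ⦃α β⦄, α ≤ β → β < omega1 → c α ⊆ c β
  countable : ∀ α < omega1, (c α).Countable
  eq_biUnion_of_isSuccLimit : ∀ β < omega1, IsSuccLimit β → c β = ⋃ α < β, c α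

namespace IsCountableFiltration

variable {X : Type*} {c d : Ordinal.{0} → Set X}

theorem exists_subset_of_countable (hc : IsCountableFiltration c) {t : Set X}
    (ht : t.Countable) (htc : t ⊆ ⋃ α < omega1, c α) : ∃ β < omega1, t ⊆ c β := by
  have hx : ∀ x ∈ t, ∃ i < omega1, x ∈ c i := by simpa [subset_def] using htc
  choose! i hiω hxi using hx
  obtain ⟨β, hβ, hiβ⟩ := (ht.image i).exists_lt_omega1_subset_Iio (image_subset_iff.2 hiω)
  exact ⟨β, hβ, fun x hx => hc.mono (hiβ (mem_image_of_mem i hx)).le hβ (hxi x hx)⟩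

theorem eq_biUnion_of_csSup_notMem (hc : IsCountableFiltration c) {s : Set Ordinal.{0}}
    (hne : s.Nonempty) (hbdd : BddAbove s) (hs : sSup s ∉ s) (hsω : sSup s < omega1) :
    c (sSup s) = ⋃ b ∈ s, c b := by
  refine (hc.eq_biUnion_of_isSuccLimit _ hsω
    (not_imp_comm.1 (csSup_mem_of_not_isSuccLimit hne hbdd) hs)).trans
    (subset_antisymm (iUnion₂_subset fun α hα => ?_) (iUnion₂_subset fun b hb => ?_))
  · obtain ⟨b, hb, hαb⟩ := exists_lt_of_lt_csSup hne hα
    exact (hc.mono hαb.le (hsω.trans_le' (le_csSup hbdd hb))).trans (subset_biUnion_of_mem hb)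
  · exact subset_biUnion_of_mem (lt_of_le_of_ne (le_csSup hbdd hb) (ne_of_mem_of_not_mem hb hs))

theorem apply_csSup_subset (hc : IsCountableFiltration c) (hd : IsCountableFiltration d)
    {s : Set Ordinal.{0}} (hne : s.Nonempty) (hbdd : BddAbove s) (hs : sSup s ∉ s)
    (hsω : sSup s < omega1) (hcd : ∀ b ∈ s, ∃ b' ∈ s, c b ⊆ d b') :
    c (sSup s) ⊆ d (sSup s) := by
  rw [hc.eq_biUnion_of_csSup_notMem hne hbdd hs hsω, hd.eq_biUnion_of_csSup_notMem hne hbdd hs hsω]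
  refine iUnion₂_subset fun b hb => ?_
  obtain ⟨b', hb', hcb⟩ := hcd b hb
  exact hcb.trans (subset_biUnion_of_mem hb')

theorem exists_gt_subset_and_subset (hc : IsCountableFiltration c) (hd : IsCountableFiltration d)
    (hcd : ⋃ α < omega1, c α = ⋃ α < omega1, d α) {ξ : Ordinal.{0}} (hξ : ξ < omega1) :
    ∃ β, ξ < β ∧ β < omega1 ∧ c ξ ⊆ d β ∧ d ξ ⊆ c β := by
  obtain ⟨β₁, hβ₁, hcβ₁⟩ := hd.exists_subset_of_countable (hc.countable ξ hξ)
    (hcd ▸ subset_biUnion_of_mem (u := c) hξ)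
  obtain ⟨β₂, hβ₂, hdβ₂⟩ := hc.exists_subset_of_countable (hd.countable ξ hξ)
    (hcd ▸ subset_biUnion_of_mem (u := d) hξ)
  have hβω : max (max β₁ β₂) (succ ξ) < omega1 :=
    max_lt (max_lt hβ₁ hβ₂) (isSuccLimit_omega1.succ_lt hξ)
  exact ⟨_, (lt_succ ξ).trans_le (le_max_right _ _), hβω,
    hcβ₁.trans (hd.mono ((le_max_left _ _).trans (le_max_left _ _)) hβω),
    hdβ₂.trans (hc.mono ((le_max_right _ _).trans (le_max_left _ _)) hβω)⟩

theorem exists_gt_mem_setOf_eq (hc : IsCountableFiltration c) (hd : IsCountableFiltration d)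
    (hcd : ⋃ α < omega1, c α = ⋃ α < omega1, d α) {α₀ : Ordinal.{0}} (hα₀ : α₀ < omega1) :
    ∃ β ∈ {β | β < omega1 ∧ c β = d β}, α₀ < β := by
  choose! F hlt hFω hcF hdF using fun ξ (hξ : ξ < omega1) =>
    hc.exists_gt_subset_and_subset hd hcd hξ
  set seq : ℕ → Ordinal.{0} := fun n => F^[n] α₀
  have hseq_succ (n : ℕ) : seq (n + 1) = F (seq n) := Function.iterate_succ_apply' F n α₀
  have hseqω (n : ℕ) : seq n < omega1 := by
    induction n with
    | zero => exact hα₀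
    | succ n ih => exact hseq_succ n ▸ hFω _ ih
  have hbdd : BddAbove (range seq) := Ordinal.bddAbove_of_small
  have hle (n : ℕ) : seq n ≤ sSup (range seq) := le_csSup hbdd ⟨n, rfl⟩
  have hnotMem : sSup (range seq) ∉ range seq := by
    rintro ⟨n, hn⟩
    exact (hlt _ (hseqω n)).not_ge (hseq_succ n ▸ hn ▸ hle (n + 1))
  have hsω : sSup (range seq) < omega1 :=
    omega1_eq_omega_one ▸ Ordinal.iSup_lt_omega_one (omega1_eq_omega_one ▸ hseqω)
  have hne : (range seq).Nonempty := range_nonempty seq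
  refine ⟨sSup (range seq), ⟨hsω, subset_antisymm ?_ ?_⟩,
    (hlt _ hα₀).trans_le (hseq_succ 0 ▸ hle 1)⟩
  · refine apply_csSup_subset hc hd hne hbdd hnotMem hsω ?_
    rintro _ ⟨n, rfl⟩
    exact ⟨_, ⟨n + 1, rfl⟩, hseq_succ n ▸ hcF _ (hseqω n)⟩
  · refine apply_csSup_subset hd hc hne hbdd hnotMem hsω ?_
    rintro _ ⟨n, rfl⟩
    exact ⟨_, ⟨n + 1, rfl⟩, hseq_succ n ▸ hdF _ (hseqω n)⟩

theorem csSup_mem_setOf_eq (hc : IsCountableFiltration c) (hd : IsCountableFiltration d)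
    {s : Set Ordinal.{0}} (hsC : s ⊆ {β | β < omega1 ∧ c β = d β})
    (hne : s.Nonempty) (hsω : sSup s < omega1) : sSup s ∈ {β | β < omega1 ∧ c β = d β} := by
  by_cases hs : sSup s ∈ s
  · exact hsC hs
  have hbdd : BddAbove s := ⟨omega1, fun b hb => (hsC hb).1.le⟩
  refine ⟨hsω, subset_antisymm ?_ ?_⟩
  · exact apply_csSup_subset hc hd hne hbdd hs hsω fun b hb => ⟨b, hb, (hsC hb).2.le⟩
  · exact apply_csSup_subset hd hc hne hbdd hs hsω fun b hb => ⟨b, hb, (hsC hb).2.ge⟩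

theorem isClub1_setOf_eq (hc : IsCountableFiltration c) (hd : IsCountableFiltration d)
    (hcd : ⋃ α < omega1, c α = ⋃ α < omega1, d α) :
    IsClub1 {β | β < omega1 ∧ c β = d β} :=
  ⟨fun _ hβ => hβ.1, fun _ => hc.exists_gt_mem_setOf_eq hd hcd,
    fun _ => csSup_mem_setOf_eq hc hd⟩

end IsCountableFiltration

theorem lt_omega2_of_Iio_eq_biUnion {c : Ordinal.{0} → Set Ordinal.{0}} {γ : Ordinal.{0}}
    (hc : ∀ α < omega1, (c α).Countable) (hγ : Iio γ = ⋃ α < omega1, c α) : γ < omega2 := by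
  have hcard : #(Iio γ) ≤ ℵ₁ := by
    rw [hγ]
    refine mk_biUnion_le_of_le_lift ?_ (aleph0_le_aleph 1) c fun α hα => ?_
    · simp [omega1]
    · exact (le_aleph0_iff_set_countable.2 (hc α hα)).trans (aleph0_le_aleph 1)
  rw [mk_Iio_ordinal, lift_le_aleph_one] at hcard
  exact lt_ord.2 (hcard.trans_lt (aleph_lt_aleph.2 one_lt_two))

theorem Order.IsSuccLimit.image_Iio_eq_biUnion {X : Type*} {β : Ordinal.{0}}
    (hβ : IsSuccLimit β) (π : Ordinal.{0} → X) : π '' Iio β = ⋃ α < β, π '' Iio α := by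
  rw [← image_iUnion₂]
  congr 1
  ext x
  simp only [mem_Iio, mem_iUnion, exists_prop]
  exact ⟨fun hx => ⟨succ x, hβ.succ_lt hx, lt_succ x⟩, fun ⟨_, hα, hxα⟩ => hxα.trans hα⟩

theorem isCountableFiltration_image_Iio {X : Type*} (π : Ordinal.{0} → X) :
    IsCountableFiltration fun α => π '' Iio α where
  mono _ _ hαβ _ := image_mono (Iio_subset_Iio hαβ)
  countable _ hα := (countable_Iio_of_lt_omega1 hα).image π
  eq_biUnion_of_isSuccLimit _ _ hβ := hβ.image_Iio_eq_biUnion π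

theorem certified_implies_coded_complement_general (A : Ordinal.{0} → Set Ordinal.{0})
    (hdisj : ∀ α β : Ordinal.{0}, α < omega1 → β < omega1 → α ≠ β →
      Disjoint (A α) (A β))
    (S : Set Ordinal.{0}) (hS : S ⊆ Set.Iio omega1)
    (γ : Ordinal.{0}) (hγ : omega1 ≤ γ) (hcert : Certified A S γ) :
    omega1 ≤ γ ∧ γ < omega2 ∧
    ∀ g : Ordinal.{0} → Ordinal.{0}, IsCanonical γ g →
      ∀ α : Ordinal.{0}, α < omega1 → α ∉ S →
        ¬ IsStationary1 {β | β < omega1 ∧ g β ∈ A α} := by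
  obtain ⟨a, ha, ha_strict, ha_cont, ha_union⟩ := hcert
  have ha_filt : IsCountableFiltration a :=
    { mono := fun α β hαβ hβ => hαβ.eq_or_lt.elim (fun h => h ▸ subset_rfl)
        fun h => (ha_strict α β h hβ).subset
      countable := fun α hα => (ha α hα).2.1
      eq_biUnion_of_isSuccLimit := ha_cont }
  refine ⟨hγ, lt_omega2_of_Iio_eq_biUnion ha_filt.countable ha_union, ?_⟩
  rintro g ⟨π, hπ, hg⟩ α hα hαS hstat
  have hclub : IsClub1 {β | β < omega1 ∧ π '' Iio β = a β} :=
    (isCountableFiltration_image_Iio π).isClub1_setOf_eq ha_filt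
      (by rw [← isSuccLimit_omega1.image_Iio_eq_biUnion, hπ.image_eq, ha_union])
  obtain ⟨β, ⟨-, hβA⟩, hβ, hβa⟩ := hstat _ hclub
  obtain ⟨ξ, hξS, hβξ⟩ := mem_iUnion₂.1 (hg β hβ ▸ hβa ▸ (ha β hβ).2.2)
  exact disjoint_left.1 (hdisj α ξ hα (hS hξS) (ne_of_mem_of_not_mem hξS hαS).symm) hβA hβξ

/-- If `Ā = ⟨A α : α < ω₁⟩` is a sequence of pairwise disjoint subsets of
`ω₁`, `S ⊆ ω₁`, and `S` is certified at `γ ≥ ω₁` modulo `Ā`, then `ω₁ ≤ γ < ω₂` and for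
every canonical function `g` for `γ` and every `α ∈ ω₁ \ S`, the set
`{β < ω₁ : g β ∈ A α}` is nonstationary. -/
theorem certified_implies_coded_complement (A : Ordinal.{0} → Set Ordinal.{0})
    (hA : ∀ α < omega1, A α ⊆ Set.Iio omega1)
    (hdisj : ∀ α β : Ordinal.{0}, α < omega1 → β < omega1 → α ≠ β →
      Disjoint (A α) (A β))
    (S : Set Ordinal.{0}) (hS : S ⊆ Set.Iio omega1)
    (γ : Ordinal.{0}) (hγ : omega1 ≤ γ) (hcert : Certified A S γ) :
    omega1 ≤ γ ∧ γ < omega2 ∧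
    ∀ g : Ordinal.{0} → Ordinal.{0}, IsCanonical γ g →
      ∀ α : Ordinal.{0}, α < omega1 → α ∉ S →
        ¬ IsStationary1 {β | β < omega1 ∧ g β ∈ A α} :=
  certified_implies_coded_complement_general A hdisj S hS γ hγ hcert
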